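/- arXiv:1211.4660 — 5 statements merged into one kernel-verified Lean document; each statement's English description precedes it below -/
import Mathlib

section
/- Let f : ℕⁿ → ℝ≥0 be subadditive and extend it to ℝ≥0ⁿ by f(r) := f(⌈r⌉) (componentwise ceiling). Then for every r ∈ ℝ≥0ⁿ, the limit f̂(r) = lim_{t→∞} f(t·r)/t exists and is finite. -/
/-! Fekete's argument. Since `f` need not be monotone, `⌈t r⌉` is split exactly as
`q • ⌈s r⌉ + y` with `q = ⌊t / (s + a)⌋₊`, where `a = ∑ i, (r i)⁻¹` is what makes
`q • ⌈s r⌉ ≤ ⌈t r⌉`; the remainder `y` is of size `O(t / s + s)`. Subadditivity and the linear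
bound `f m ≤ (n + 1) f 0 + ∑ mᵢ f(eᵢ)` then give `f⌈t r⌉ / t ≤ f⌈s r⌉ / s + K / s + E_s / t`,
so `limsup ≤ f⌈s r⌉ / s + K / s` for every `s`, which forces `limsup ≤ liminf`. -/

open Filter Topology

theorem exists_tendsto_of_eventually_le_add {u e : ℕ → ℝ} (hu : BddBelow (Set.range u))
    (he : Tendsto e atTop (𝓝 0)) (h : ∀ᶠ s in atTop, ∀ᶠ t in atTop, u t ≤ u s + e s) :
    ∃ L, Tendsto u atTop (𝓝 L) := by
  have hbdd_above : IsBoundedUnder (· ≤ ·) atTop u := by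
    obtain ⟨s, hs⟩ := h.exists
    exact isBoundedUnder_of_eventually_le hs
  have hbdd_below : IsBoundedUnder (· ≥ ·) atTop u := hu.isBoundedUnder_of_range
  refine ⟨limsup u atTop,
    tendsto_of_le_liminf_of_limsup_le ?_ le_rfl hbdd_above hbdd_below⟩
  refine le_of_forall_sub_le fun ε hε => le_liminf_of_le hbdd_above.isCoboundedUnder_ge ?_
  filter_upwards [h, he.eventually (gt_mem_nhds hε)] with s hs hes
  have := limsup_le_of_le hbdd_below.isCoboundedUnder_le hs
  linarith

section Subadditive

variable {M : Type*} [AddCommMonoid M] {f : M → ℝ}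

theorem apply_nsmul_add_le (hsub : ∀ x y, f (x + y) ≤ f x + f y) (q : ℕ) (x y : M) :
    f (q • x + y) ≤ q * f x + f y := by
  induction q with
  | zero => simp
  | succ q ih =>
    calc f ((q + 1) • x + y) = f (x + (q • x + y)) := by rw [succ_nsmul, add_comm _ x, add_assoc]
      _ ≤ f x + f (q • x + y) := hsub _ _
      _ ≤ (q + 1 : ℕ) * f x + f y := by push_cast; linarith

theorem apply_sum_le (hsub : ∀ x y, f (x + y) ≤ f x + f y) {ι : Type*} (s : Finset ι)
    (g : ι → M) :
    f (∑ i ∈ s, g i) ≤ f 0 + ∑ i ∈ s, f (g i) := by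
  classical
  induction s using Finset.induction_on with
  | empty => simp
  | insert a s ha ih =>
    rw [Finset.sum_insert ha, Finset.sum_insert ha]
    linarith [hsub (g a) (∑ i ∈ s, g i)]

end Subadditive

theorem apply_le_add_sum_mul_apply_single {n : ℕ} {f : (Fin n → ℕ) → ℝ}
    (hsub : ∀ k m, f (k + m) ≤ f k + f m) (m : Fin n → ℕ) :
    f m ≤ (n + 1) * f 0 + ∑ i, m i * f (Pi.single i 1) := by
  have hsingle : ∀ i, f (Pi.single i (m i)) ≤ m i * f (Pi.single i 1) + f 0 := fun i => by
    simpa [← Pi.single_smul] using apply_nsmul_add_le hsub (m i) (Pi.single i 1) 0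
  calc f m = f (∑ i, Pi.single i (m i)) := by rw [Finset.univ_sum_single]
    _ ≤ f 0 + ∑ i, f (Pi.single i (m i)) := apply_sum_le hsub _ _
    _ ≤ f 0 + ∑ i, (m i * f (Pi.single i 1) + f 0) := by gcongr with i; exact hsingle i
    _ = (n + 1) * f 0 + ∑ i, m i * f (Pi.single i 1) := by
      simp [Finset.sum_add_distrib]; ring

theorem floor_div_mul_ceil_le_ceil {x c : ℝ} {s t : ℕ} (hc : 0 < c)
    (hκ : (⌈s * x⌉₊ : ℝ) ≤ c * x) : ⌊t / c⌋₊ * ⌈s * x⌉₊ ≤ ⌈t * x⌉₊ := by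
  have hq : (⌊t / c⌋₊ : ℝ) ≤ t / c := Nat.floor_le (by positivity)
  have : (⌊t / c⌋₊ * ⌈s * x⌉₊ : ℝ) ≤ ⌈t * x⌉₊ :=
    calc (⌊t / c⌋₊ * ⌈s * x⌉₊ : ℝ) ≤ t / c * (c * x) := by gcongr
      _ = t * x := by field_simp
      _ ≤ ⌈t * x⌉₊ := Nat.le_ceil _
  exact_mod_cast this

theorem ceil_sub_floor_div_mul_ceil_le {x c : ℝ} (s t : ℕ) (hx : 0 ≤ x) (hc : 0 < c) :
    (⌈t * x⌉₊ : ℝ) - ⌊t / c⌋₊ * ⌈s * x⌉₊ ≤ (t * (1 - s / c) + s) * x + 1 := by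
  have h1 : (⌈t * x⌉₊ : ℝ) < t * x + 1 := Nat.ceil_lt_add_one (by positivity)
  have h2 : (t / c - 1) * (s * x) ≤ ⌊t / c⌋₊ * ⌈s * x⌉₊ := by
    gcongr
    · exact (Nat.sub_one_lt_floor _).le
    · exact Nat.le_ceil _
  have h3 : (t * (1 - s / c) + s) * x = t * x - (t / c - 1) * (s * x) := by field_simp; ring
  linarith

-- With the convention `0⁻¹ = 0`, `(∑ j, (r j)⁻¹) * r i ≥ 1` exactly when `r i > 0`.
theorem ceil_mul_le_add_sum_inv_mul {ι : Type*} [Fintype ι] {r : ι → ℝ} (hr : ∀ i, 0 ≤ r i)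
    (s : ℕ) (i : ι) : (⌈s * r i⌉₊ : ℝ) ≤ (s + ∑ j, (r j)⁻¹) * r i := by
  rcases (hr i).eq_or_lt with h | h
  · simp [← h]
  · have : (r i)⁻¹ ≤ ∑ j, (r j)⁻¹ :=
      Finset.single_le_sum (f := fun j => (r j)⁻¹) (fun j _ => inv_nonneg.2 (hr j))
        (Finset.mem_univ i)
    calc (⌈s * r i⌉₊ : ℝ) ≤ s * r i + (r i)⁻¹ * r i := by
          rw [inv_mul_cancel₀ h.ne']; exact (Nat.ceil_lt_add_one (by positivity)).le
      _ ≤ (s + ∑ j, (r j)⁻¹) * r i := by nlinarith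

section CeilSMul

variable {n : ℕ} {f : (Fin n → ℕ) → ℝ} {r : Fin n → ℝ}

theorem apply_ceil_mul_le (hf0 : ∀ k, 0 ≤ f k) (hsub : ∀ k m, f (k + m) ≤ f k + f m)
    (hr : ∀ i, 0 ≤ r i) (s t : ℕ) {c : ℝ} (hc : 0 < c)
    (hκ : ∀ i, (⌈s * r i⌉₊ : ℝ) ≤ c * r i) :
    f (fun i => ⌈(t : ℝ) * r i⌉₊) ≤ ⌊t / c⌋₊ * f (fun i => ⌈(s : ℝ) * r i⌉₊) + (n + 1) * f 0
      + (t * (1 - s / c) + s) * ∑ i, r i * f (Pi.single i 1) + ∑ i, f (Pi.single i 1) := by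
  set w : Fin n → ℝ := fun i => f (Pi.single i 1)
  set κ : Fin n → ℕ := fun i => ⌈(s : ℝ) * r i⌉₊
  set m : Fin n → ℕ := fun i => ⌈(t : ℝ) * r i⌉₊
  set q : ℕ := ⌊t / c⌋₊
  have hle : q • κ ≤ m := fun i => floor_div_mul_ceil_le_ceil hc (hκ i)
  have hrem : ∀ i, (((m - q • κ) i : ℕ) : ℝ) ≤ (t * (1 - s / c) + s) * r i + 1 := by
    intro i
    rw [Pi.sub_apply, Nat.cast_sub (hle i)]
    simpa using ceil_sub_floor_div_mul_ceil_le s t (hr i) hc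
  calc f m = f (q • κ + (m - q • κ)) := by rw [add_tsub_cancel_of_le hle]
    _ ≤ q * f κ + f (m - q • κ) := apply_nsmul_add_le hsub _ _ _
    _ ≤ q * f κ + ((n + 1) * f 0 + ∑ i, ((m - q • κ) i : ℕ) * w i) := by
      gcongr; exact apply_le_add_sum_mul_apply_single hsub _
    _ ≤ q * f κ + ((n + 1) * f 0 + ∑ i, ((t * (1 - s / c) + s) * r i + 1) * w i) := by
      gcongr with i
      · exact hf0 _
      · exact hrem i
    _ = q * f κ + (n + 1) * f 0 + (t * (1 - s / c) + s) * ∑ i, r i * w i + ∑ i, w i := by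
      simp only [add_mul, one_mul, Finset.sum_add_distrib, Finset.mul_sum, mul_assoc]
      ring

theorem exists_ceil_smul_div_le (hf0 : ∀ k, 0 ≤ f k) (hsub : ∀ k m, f (k + m) ≤ f k + f m)
    (hr : ∀ i, 0 ≤ r i) :
    ∃ K : ℝ, ∀ s : ℕ, 0 < s → ∃ E : ℝ, ∀ t : ℕ, 0 < t →
      f (fun i => ⌈(t : ℝ) * r i⌉₊) / t ≤ f (fun i => ⌈(s : ℝ) * r i⌉₊) / s + K / s + E / t := by
  set a : ℝ := ∑ i, (r i)⁻¹
  set R : ℝ := ∑ i, r i * f (Pi.single i 1)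
  have ha : 0 ≤ a := Finset.sum_nonneg fun i _ => inv_nonneg.2 (hr i)
  have hR : 0 ≤ R := Finset.sum_nonneg fun i _ => mul_nonneg (hr i) (hf0 _)
  refine ⟨a * R, fun s hs => ⟨(n + 1) * f 0 + s * R + ∑ i, f (Pi.single i 1), fun t ht => ?_⟩⟩
  set fκ := f (fun i => ⌈(s : ℝ) * r i⌉₊)
  have hs' : (0 : ℝ) < s := by exact_mod_cast hs
  have ht' : (0 : ℝ) < t := by exact_mod_cast ht
  have hsc : (s : ℝ) ≤ s + a := le_add_of_nonneg_right ha
  have hq : ⌊t / (s + a)⌋₊ * fκ ≤ t * (fκ / s) :=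
    calc ⌊t / (s + a)⌋₊ * fκ ≤ t / (s + a) * fκ := by
          gcongr
          · exact hf0 _
          · exact Nat.floor_le (by positivity)
      _ ≤ t / s * fκ := by
          gcongr
          exact hf0 _
      _ = t * (fκ / s) := by ring
  have haR : t * (1 - s / (s + a)) * R ≤ t * (a * R / s) :=
    calc t * (1 - s / (s + a)) * R = t * (a * R / (s + a)) := by field_simp; ring
      _ ≤ t * (a * R / s) := by gcongr
  have hfm := apply_ceil_mul_le hf0 hsub hr s t (by positivity : (0 : ℝ) < s + a)
    (ceil_mul_le_add_sum_inv_mul hr s)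
  calc f (fun i => ⌈(t : ℝ) * r i⌉₊) / t
        ≤ (t * (fκ / s + a * R / s) + ((n + 1) * f 0 + s * R + ∑ i, f (Pi.single i 1))) / t := by
        gcongr; linarith
    _ = fκ / s + a * R / s + ((n + 1) * f 0 + s * R + ∑ i, f (Pi.single i 1)) / t := by
        field_simp

end CeilSMul

/-- for a nonnegative subadditive `f : ℕⁿ → ℝ`, extended to
nonnegative real vectors via componentwise ceilings, the limit
`lim_{t→∞} f(t·r)/t` exists and is finite. -/
theorem stmt1 (n : ℕ) (f : (Fin n → ℕ) → ℝ)
    (hf0 : ∀ k, 0 ≤ f k)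
    (hsub : ∀ k m, f (k + m) ≤ f k + f m)
    (r : Fin n → ℝ) (hr : ∀ i, 0 ≤ r i) :
    ∃ L : ℝ, Tendsto (fun t : ℕ => f (fun i => ⌈(t : ℝ) * r i⌉₊) / t)
      atTop (𝓝 L) := by
  obtain ⟨K, hK⟩ := exists_ceil_smul_div_le hf0 hsub hr
  refine exists_tendsto_of_eventually_le_add ⟨0, ?_⟩
    (tendsto_const_div_atTop_nhds_zero_nat (K + 1)) ?_
  · rintro _ ⟨t, rfl⟩
    exact div_nonneg (hf0 _) t.cast_nonneg
  filter_upwards [eventually_gt_atTop 0] with s hs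
  obtain ⟨E, hE⟩ := hK s hs
  have hEt : ∀ᶠ t : ℕ in atTop, E / t < 1 / s :=
    (tendsto_const_div_atTop_nhds_zero_nat E).eventually (gt_mem_nhds (by positivity))
  filter_upwards [eventually_gt_atTop 0, hEt] with t ht hEt
  linarith [hE t ht, add_div K 1 (s : ℝ)]
end

section
/- Let f : ℕⁿ → ℝ≥0 be subadditive and satisfy f(k) − f(k + e_i) ≤ D₀ < ∞ for all k, i. Then the limit function f̂(r) = lim_{t→∞} f(⌈t·r⌉)/t on ℝ≥0ⁿ is subadditive: f̂(r₁ + r₂) ≤ f̂(r₁) + f̂(r₂) for all r₁, r₂ ∈ ℝ≥0ⁿ. -/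
open Filter Topology

lemma stmt6_aux (n : ℕ) (f : (Fin n → ℕ) → ℝ) (D₀ : ℝ)
    (hD₀ : ∀ (k : Fin n → ℕ) (i : Fin n), f k - f (k + Pi.single i 1) ≤ D₀) :
    ∀ (s : ℕ) (d : Fin n → ℕ), (∑ i, d i) = s → ∀ k,
      f k ≤ f (k + d) + (max D₀ 0) * s := by
  intro s
  induction s with
  | zero =>
    intro d hd k
    have : ∀ i, d i = 0 := by
      intro i
      exact (Finset.sum_eq_zero_iff.mp hd) i (Finset.mem_univ i)
    have hd0 : d = 0 := funext this
    simp [hd0]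
  | succ s ih =>
    intro d hd k
    have hpos : ∃ i, d i ≠ 0 := by
      by_contra h
      push_neg at h
      simp [funext h] at hd
    obtain ⟨i, hi⟩ := hpos
    set d' := Function.update d i (d i - 1) with hd'
    have hdd : d = d' + Pi.single i 1 := by
      funext j
      by_cases hj : j = i
      · subst hj
        simp [hd', Nat.sub_add_cancel (Nat.one_le_iff_ne_zero.mpr hi)]
      · simp [hd', Function.update_of_ne hj, Pi.single_eq_of_ne hj]
    have hsum : ∑ j, d' j = s := by
      have : ∑ j, d j = (∑ j, d' j) + 1 := by
        rw [hdd]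
        simp [Finset.sum_add_distrib]
      omega
    have h1 : f k ≤ f (k + Pi.single i 1) + max D₀ 0 := by
      have := hD₀ k i
      have : f k - f (k + Pi.single i 1) ≤ max D₀ 0 := this.trans (le_max_left _ _)
      linarith
    have h2 := ih d' hsum (k + Pi.single i 1)
    have heq : k + Pi.single i 1 + d' = k + d := by
      rw [hdd]; ring
    rw [heq] at h2
    push_cast
    calc f k ≤ f (k + Pi.single i 1) + max D₀ 0 := h1
      _ ≤ f (k + d) + max D₀ 0 * s + max D₀ 0 := by linarith
      _ = f (k + d) + max D₀ 0 * (s + 1) := by ring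

/-- for a nonnegative subadditive `f : ℕⁿ → ℝ` with bounded
decrease under unit coordinate increments, the limit function
`f̂(r) = lim_{t→∞} f(⌈t·r⌉)/t` is subadditive on ℝ≥0ⁿ. -/
theorem stmt6 (n : ℕ) (f : (Fin n → ℕ) → ℝ)
    (hf0 : ∀ k, 0 ≤ f k)
    (hsub : ∀ k m, f (k + m) ≤ f k + f m)
    (D₀ : ℝ)
    (hD₀ : ∀ (k : Fin n → ℕ) (i : Fin n), f k - f (k + Pi.single i 1) ≤ D₀)
    (fhat : (Fin n → ℝ) → ℝ)
    (hfhat : ∀ r : Fin n → ℝ, (∀ i, 0 ≤ r i) →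
      Tendsto (fun t : ℕ => f (fun i => ⌈(t : ℝ) * r i⌉₊) / t) atTop (𝓝 (fhat r)))
    (r₁ r₂ : Fin n → ℝ) (h₁ : ∀ i, 0 ≤ r₁ i) (h₂ : ∀ i, 0 ≤ r₂ i) :
    fhat (r₁ + r₂) ≤ fhat r₁ + fhat r₂ := by
  set D := max D₀ 0 with hD
  have hDnn : 0 ≤ D := le_max_right _ _
  have h12 : ∀ i, 0 ≤ (r₁ + r₂) i := fun i => add_nonneg (h₁ i) (h₂ i)
  have hlim1 := hfhat (r₁ + r₂) h12
  have hlim2 : Tendsto (fun t : ℕ =>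
      f (fun i => ⌈(t : ℝ) * r₁ i⌉₊) / t + f (fun i => ⌈(t : ℝ) * r₂ i⌉₊) / t
        + D * n / t) atTop (𝓝 (fhat r₁ + fhat r₂ + 0)) := by
    exact ((hfhat r₁ h₁).add (hfhat r₂ h₂)).add
      (tendsto_const_div_atTop_nhds_zero_nat (D * n))
  rw [add_zero] at hlim2
  refine le_of_tendsto_of_tendsto' hlim1 hlim2 ?_
  intro t
  rcases Nat.eq_zero_or_pos t with ht | ht
  · simp [ht]
  have htR : (0:ℝ) < t := by exact_mod_cast ht
  set K : Fin n → ℕ := fun i => ⌈(t : ℝ) * (r₁ + r₂) i⌉₊ with hK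
  set k₁ : Fin n → ℕ := fun i => ⌈(t : ℝ) * r₁ i⌉₊ with hk₁
  set k₂ : Fin n → ℕ := fun i => ⌈(t : ℝ) * r₂ i⌉₊ with hk₂
  have hle : ∀ i, K i ≤ k₁ i + k₂ i := by
    intro i
    have : (t : ℝ) * (r₁ + r₂) i = t * r₁ i + t * r₂ i := by
      simp [Pi.add_apply]; ring
    rw [hK]
    simp only [this]
    exact Nat.ceil_add_le _ _
  have hdle : ∀ i, k₁ i + k₂ i ≤ K i + 1 := by
    intro i
    have ha : (0:ℝ) ≤ (t : ℝ) * r₁ i := mul_nonneg (le_of_lt htR) (h₁ i)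
    have hb : (0:ℝ) ≤ (t : ℝ) * r₂ i := mul_nonneg (le_of_lt htR) (h₂ i)
    have h1 : (k₁ i : ℝ) < (t : ℝ) * r₁ i + 1 := Nat.ceil_lt_add_one ha
    have h2 : (k₂ i : ℝ) < (t : ℝ) * r₂ i + 1 := Nat.ceil_lt_add_one hb
    have h3 : (t : ℝ) * r₁ i + (t : ℝ) * r₂ i ≤ (K i : ℝ) := by
      have : (t : ℝ) * (r₁ + r₂) i ≤ (K i : ℝ) := Nat.le_ceil _
      calc (t : ℝ) * r₁ i + (t : ℝ) * r₂ i = (t : ℝ) * (r₁ + r₂) i := by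
            simp [Pi.add_apply]; ring
        _ ≤ (K i : ℝ) := this
    have : ((k₁ i + k₂ i : ℕ) : ℝ) < ((K i + 2 : ℕ) : ℝ) := by push_cast; linarith
    have := Nat.cast_lt.mp this
    omega
  set d : Fin n → ℕ := fun i => k₁ i + k₂ i - K i with hd
  have hKd : K + d = k₁ + k₂ := by
    funext i
    have := hle i
    simp only [Pi.add_apply, hd]
    omega
  have hsum : ∑ i, d i ≤ n := by
    calc ∑ i, d i ≤ ∑ _i : Fin n, 1 := by
          apply Finset.sum_le_sum
          intro i _
          have := hle i; have := hdle i
          simp only [hd]; omega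
      _ = n := by simp
  have haux := stmt6_aux n f D₀ hD₀ (∑ i, d i) d rfl K
  rw [hKd] at haux
  have hmain : f K ≤ f k₁ + f k₂ + D * n := by
    calc f K ≤ f (k₁ + k₂) + D * (∑ i, d i) := haux
      _ ≤ f k₁ + f k₂ + D * n := by
          have h5 := hsub k₁ k₂
          have h6 : D * (∑ i, d i : ℕ) ≤ D * n := by
            apply mul_le_mul_of_nonneg_left _ hDnn
            exact_mod_cast hsum
          linarith
  calc f K / t ≤ (f k₁ + f k₂ + D * n) / t := by gcongr
    _ = f k₁ / t + f k₂ / t + D * n / t := by ring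
end

section
/- Let f : ℕⁿ → ℝ≥0 be subadditive, satisfy the unit-increment bound f(k) − f(k+e_i) ≤ D₀, and extend f to ℝ≥0ⁿ by ceilings. Let f̂(r) = lim_{t→∞} f(t·r)/t. Then f̂ is Lipschitz continuous: |f̂(r) − f̂(s)| ≤ D·Σ_{i=1}^n |rᵢ − sᵢ|, where D = max{f(e₁),...,f(e_n), D₀}. -/
open Filter Topology

/-- for a nonnegative subadditive `f : ℕⁿ → ℝ` with
`f k − f (k + eᵢ) ≤ D₀`, the limit function `f̂(r) = lim f(⌈t·r⌉)/t` is
Lipschitz with constant `D = max {f e₁, ..., f eₙ, D₀}` in the ℓ¹ sense. -/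
theorem stmt8 (n : ℕ) (f : (Fin n → ℕ) → ℝ)
    (hf0 : ∀ k, 0 ≤ f k)
    (hsub : ∀ k m, f (k + m) ≤ f k + f m)
    (D₀ : ℝ)
    (hD₀ : ∀ (k : Fin n → ℕ) (i : Fin n), f k - f (k + Pi.single i 1) ≤ D₀)
    (D : ℝ)
    (hD : IsGreatest (insert D₀ (Set.range fun i : Fin n => f (Pi.single i 1))) D)
    (fhat : (Fin n → ℝ) → ℝ)
    (hfhat : ∀ r : Fin n → ℝ, (∀ i, 0 ≤ r i) →
      Tendsto (fun t : ℕ => f (fun i => ⌈(t : ℝ) * r i⌉₊) / t) atTop (𝓝 (fhat r)))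
    (r s : Fin n → ℝ) (hr : ∀ i, 0 ≤ r i) (hs : ∀ i, 0 ≤ s i) :
    |fhat r - fhat s| ≤ D * ∑ i, |r i - s i| := by
  by_cases hn : n = 0
  · subst hn
    have hrs : r = s := funext fun i => i.elim0
    simp [hrs]
  -- basic facts about D
  have hD₀D : D₀ ≤ D := hD.2 (Set.mem_insert _ _)
  have hDe : ∀ i : Fin n, f (Pi.single i 1) ≤ D := fun i =>
    hD.2 (Set.mem_insert_of_mem _ ⟨i, rfl⟩)
  have hDnn : 0 ≤ D := le_trans (hf0 _) (hDe ⟨0, Nat.pos_of_ne_zero hn⟩)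
  -- Lemma A: growth bound
  have lemA : ∀ N (d k : Fin n → ℕ), ∑ i, d i = N → f (k + d) ≤ f k + D * N := by
    intro N
    induction N with
    | zero =>
      intro d k hd
      have hd0 : d = 0 := by
        funext j
        exact (Finset.sum_eq_zero_iff.mp hd) j (Finset.mem_univ j)
      simp [hd0]
    | succ N ih =>
      intro d k hd
      obtain ⟨i, -, hi⟩ : ∃ i ∈ Finset.univ, d i ≠ 0 :=
        Finset.exists_ne_zero_of_sum_ne_zero (by rw [hd]; exact Nat.succ_ne_zero N)
      set d' : Fin n → ℕ := fun j => d j - (Pi.single i 1 : Fin n → ℕ) j with hd'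
      have hdd : d = d' + Pi.single i 1 := by
        funext j
        by_cases hj : j = i
        · subst hj
          simp only [Pi.add_apply, hd', Pi.single_eq_same]
          omega
        · simp only [Pi.add_apply, hd', Pi.single_eq_of_ne hj]
          omega
      have hsum : ∑ j, d' j = N := by
        rw [hdd] at hd
        simp only [Pi.add_apply, Finset.sum_add_distrib,
          Finset.sum_pi_single', Finset.mem_univ, if_true] at hd
        omega
      calc f (k + d) = f ((k + d') + Pi.single i 1) := by rw [hdd, add_assoc]
        _ ≤ f (k + d') + f (Pi.single i 1) := hsub _ _
        _ ≤ (f k + D * N) + D := add_le_add (ih d' k hsum) (hDe i)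
        _ = f k + D * (N + 1 : ℕ) := by push_cast; ring
  -- Lemma B: decrease bound
  have lemB : ∀ N (d k : Fin n → ℕ), ∑ i, d i = N → f k ≤ f (k + d) + D₀ * N := by
    intro N
    induction N with
    | zero =>
      intro d k hd
      have hd0 : d = 0 := by
        funext j
        exact (Finset.sum_eq_zero_iff.mp hd) j (Finset.mem_univ j)
      simp [hd0]
    | succ N ih =>
      intro d k hd
      obtain ⟨i, -, hi⟩ : ∃ i ∈ Finset.univ, d i ≠ 0 :=
        Finset.exists_ne_zero_of_sum_ne_zero (by rw [hd]; exact Nat.succ_ne_zero N)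
      set d' : Fin n → ℕ := fun j => d j - (Pi.single i 1 : Fin n → ℕ) j with hd'
      have hdd : d = d' + Pi.single i 1 := by
        funext j
        by_cases hj : j = i
        · subst hj
          simp only [Pi.add_apply, hd', Pi.single_eq_same]
          omega
        · simp only [Pi.add_apply, hd', Pi.single_eq_of_ne hj]
          omega
      have hsum : ∑ j, d' j = N := by
        rw [hdd] at hd
        simp only [Pi.add_apply, Finset.sum_add_distrib,
          Finset.sum_pi_single', Finset.mem_univ, if_true] at hd
        omega
      have h1 : f k ≤ f (k + Pi.single i 1) + D₀ := by
        have := hD₀ k i; linarith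
      have h2 : f (k + Pi.single i 1) ≤ f ((k + Pi.single i 1) + d') + D₀ * N :=
        ih d' (k + Pi.single i 1) hsum
      have heq : (k + Pi.single i 1) + d' = k + d := by
        rw [hdd]; abel
      rw [heq] at h2
      push_cast
      linarith
  -- one-sided pointwise bound
  have oneside : ∀ k m : Fin n → ℕ, f k - f m ≤ D * ∑ i, |(k i : ℝ) - m i| := by
    intro k m
    set M : Fin n → ℕ := fun i => max (k i) (m i) with hM
    have hB : f k ≤ f (k + fun i => M i - k i) + D₀ * (∑ i, (M i - k i) : ℕ) :=
      lemB _ _ k rfl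
    have hA : f (m + fun i => M i - m i) ≤ f m + D * (∑ i, (M i - m i) : ℕ) :=
      lemA _ _ m rfl
    have hkM : (k + fun i => M i - k i) = M := by
      funext j; simp only [Pi.add_apply, hM]
      rcases le_total (k j) (m j) with h | h
      · rw [max_eq_right h]; omega
      · rw [max_eq_left h]; omega
    have hmM : (m + fun i => M i - m i) = M := by
      funext j; simp only [Pi.add_apply, hM]
      rcases le_total (k j) (m j) with h | h
      · rw [max_eq_right h]; omega
      · rw [max_eq_left h]; omega
    rw [hkM] at hB
    rw [hmM] at hA
    have hcoord : ∀ i, ((M i - k i : ℕ) : ℝ) + ((M i - m i : ℕ) : ℝ)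
        = |(k i : ℝ) - m i| := by
      intro i
      rcases le_total (k i) (m i) with h | h
      · have h1 : M i = m i := max_eq_right h
        have hc : ((k i : ℝ)) ≤ (m i : ℝ) := Nat.cast_le.mpr h
        rw [h1, Nat.cast_sub h, Nat.sub_self, abs_sub_comm,
          abs_of_nonneg (sub_nonneg.mpr hc)]
        simp
      · have h1 : M i = k i := max_eq_left h
        have hc : ((m i : ℝ)) ≤ (k i : ℝ) := Nat.cast_le.mpr h
        rw [h1, Nat.cast_sub h, Nat.sub_self,
          abs_of_nonneg (sub_nonneg.mpr hc)]
        simp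
    have hAk : (0:ℝ) ≤ ((∑ i, (M i - k i) : ℕ) : ℝ) := Nat.cast_nonneg _
    have hD₀le : D₀ * ((∑ i, (M i - k i) : ℕ) : ℝ) ≤ D * ((∑ i, (M i - k i) : ℕ) : ℝ) :=
      mul_le_mul_of_nonneg_right hD₀D hAk
    have hsumeq : ((∑ i, (M i - k i) : ℕ) : ℝ) + ((∑ i, (M i - m i) : ℕ) : ℝ)
        = ∑ i, |(k i : ℝ) - m i| := by
      push_cast
      rw [← Finset.sum_add_distrib]
      exact Finset.sum_congr rfl fun i _ => hcoord i
    have : f k - f m ≤ D * (((∑ i, (M i - k i) : ℕ) : ℝ) + ((∑ i, (M i - m i) : ℕ) : ℝ)) := by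
      rw [mul_add]; linarith
    rwa [hsumeq] at this
  have key : ∀ k m : Fin n → ℕ, |f k - f m| ≤ D * ∑ i, |(k i : ℝ) - m i| := by
    intro k m
    rw [abs_sub_le_iff]
    refine ⟨oneside k m, ?_⟩
    have := oneside m k
    have heq : (∑ i, |(m i : ℝ) - k i|) = ∑ i, |(k i : ℝ) - m i| :=
      Finset.sum_congr rfl fun i _ => abs_sub_comm _ _
    rwa [heq] at this
  -- limit argument
  have htend : Tendsto (fun t : ℕ =>
      |f (fun i => ⌈(t : ℝ) * r i⌉₊) / t - f (fun i => ⌈(t : ℝ) * s i⌉₊) / t|)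
      atTop (𝓝 |fhat r - fhat s|) :=
    ((hfhat r hr).sub (hfhat s hs)).abs
  have hlim2 : Tendsto (fun t : ℕ => D * ∑ i, |r i - s i| + D * n / t)
      atTop (𝓝 (D * ∑ i, |r i - s i|)) := by
    have : Tendsto (fun t : ℕ => D * n / t) atTop (𝓝 0) :=
      tendsto_const_nhds.div_atTop tendsto_natCast_atTop_atTop
    simpa using tendsto_const_nhds.add this
  refine le_of_tendsto_of_tendsto htend hlim2 ?_
  filter_upwards [eventually_ge_atTop 1] with t ht
  have hT : (0:ℝ) < t := by exact_mod_cast ht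
  set k : Fin n → ℕ := fun i => ⌈(t : ℝ) * r i⌉₊ with hk
  set m : Fin n → ℕ := fun i => ⌈(t : ℝ) * s i⌉₊ with hm
  have hceil : ∀ i, |(k i : ℝ) - m i| ≤ (t : ℝ) * |r i - s i| + 1 := by
    intro i
    rw [abs_sub_le_iff]
    constructor
    · have h1 : (k i : ℝ) ≤ (t : ℝ) * r i + 1 :=
        le_of_lt (Nat.ceil_lt_add_one (mul_nonneg hT.le (hr i)))
      have h2 : (t : ℝ) * s i ≤ m i := Nat.le_ceil _
      have h3 : (t : ℝ) * r i - (t : ℝ) * s i ≤ (t : ℝ) * |r i - s i| := by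
        rw [← mul_sub]
        exact mul_le_mul_of_nonneg_left (le_abs_self _) hT.le
      linarith
    · have h1 : (m i : ℝ) ≤ (t : ℝ) * s i + 1 :=
        le_of_lt (Nat.ceil_lt_add_one (mul_nonneg hT.le (hs i)))
      have h2 : (t : ℝ) * r i ≤ k i := Nat.le_ceil _
      have h3 : (t : ℝ) * s i - (t : ℝ) * r i ≤ (t : ℝ) * |r i - s i| := by
        rw [← mul_sub]
        calc (t:ℝ) * (s i - r i) ≤ (t:ℝ) * |s i - r i| :=
              mul_le_mul_of_nonneg_left (le_abs_self _) hT.le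
          _ = (t:ℝ) * |r i - s i| := by rw [abs_sub_comm]
      linarith
  have hsumle : (∑ i, |(k i : ℝ) - m i|) ≤ (t : ℝ) * ∑ i, |r i - s i| + n := by
    calc (∑ i, |(k i : ℝ) - m i|) ≤ ∑ i, ((t : ℝ) * |r i - s i| + 1) :=
          Finset.sum_le_sum fun i _ => hceil i
      _ = (t : ℝ) * ∑ i, |r i - s i| + n := by
          rw [Finset.sum_add_distrib, Finset.mul_sum]
          simp
  have hkey := key k m
  have habs : |f k / t - f m / t| = |f k - f m| / t := by
    rw [div_sub_div_same, abs_div, abs_of_pos hT]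
  calc |f k / (t:ℝ) - f m / t| = |f k - f m| / t := habs
    _ ≤ (D * ∑ i, |(k i : ℝ) - m i|) / t :=
        div_le_div_of_nonneg_right hkey hT.le
    _ ≤ (D * ((t : ℝ) * ∑ i, |r i - s i| + n)) / t :=
        div_le_div_of_nonneg_right (mul_le_mul_of_nonneg_left hsumle hDnn) hT.le
    _ = D * ∑ i, |r i - s i| + D * n / t := by
        field_simp
end

section
/- Let f : ℕⁿ → ℝ≥0 be subadditive, satisfy the unit-increment bound, and let f̂(λ) = lim_{t→∞} f(⌈t·λ⌉)/t. If r_t ∈ ℝ≥0ⁿ is a sequence with lim_{t→∞} r_t = λ (componentwise, with λ finite), then lim_{t→∞} f(⌈t·r_t⌉)/t = f̂(λ). -/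
open Filter Topology

/-- for a nonnegative subadditive `f : ℕⁿ → ℝ` with unit-increment
bound `D`, if `r_t → λ` componentwise then `f(⌈t·r_t⌉)/t → f̂(λ)`, where
`f̂(λ) = lim_{t→∞} f(⌈t·λ⌉)/t`. -/
theorem stmt9 (n : ℕ) (f : (Fin n → ℕ) → ℝ)
    (hf0 : ∀ k, 0 ≤ f k)
    (hsub : ∀ k m, f (k + m) ≤ f k + f m)
    (D : ℝ)
    (hD : ∀ (k : Fin n → ℕ) (i : Fin n), |f (k + Pi.single i 1) - f k| ≤ D)
    (lam : Fin n → ℝ) (hlam : ∀ i, 0 ≤ lam i)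
    (fhatlam : ℝ)
    (hfhat : Tendsto (fun t : ℕ => f (fun i => ⌈(t : ℝ) * lam i⌉₊) / t)
      atTop (𝓝 fhatlam))
    (r : ℕ → Fin n → ℝ) (hr : ∀ t i, 0 ≤ r t i)
    (hconv : ∀ i, Tendsto (fun t : ℕ => r t i) atTop (𝓝 (lam i))) :
    Tendsto (fun t : ℕ => f (fun i => ⌈(t : ℝ) * r t i⌉₊) / t)
      atTop (𝓝 fhatlam) := by
  have hDE : ∀ (k : Fin n → ℕ) (i : Fin n), |f (k + Pi.single i 1) - f k| ≤ |D| :=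
    fun k i => (hD k i).trans (le_abs_self D)
  -- key: moving by a vector v changes f by at most |D| * (∑ v i)
  have key : ∀ (N : ℕ) (v k : Fin n → ℕ), (∑ i, v i) = N → |f (k + v) - f k| ≤ |D| * N := by
    intro N
    induction N with
    | zero =>
      intro v k hv
      have hv0 : v = 0 := by
        funext i
        exact Finset.sum_eq_zero_iff.mp hv i (Finset.mem_univ i)
      simp [hv0]
    | succ N ih =>
      intro v k hv
      have hex : ∃ i, 0 < v i := by
        by_contra h
        push_neg at h
        have h0 : ∀ i ∈ Finset.univ, v i = 0 := fun i _ => Nat.le_zero.mp (h i)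
        rw [Finset.sum_eq_zero h0] at hv
        omega
      obtain ⟨i, hi⟩ := hex
      set v' : Fin n → ℕ := v - Pi.single i 1 with hv'def
      have hvv : v' + Pi.single i 1 = v := by
        funext j
        by_cases hj : j = i
        · subst hj
          simp [v', Pi.sub_apply]
          omega
        · simp [v', Pi.sub_apply, Pi.single_eq_of_ne hj]
      have hsum' : ∑ j, v' j = N := by
        have h1 : ∑ j, v' j + 1 = N + 1 := by
          rw [← hv, ← hvv]
          simp [Pi.add_apply, Finset.sum_add_distrib, Finset.sum_pi_single']
        omega
      have e1 : k + v = (k + v') + Pi.single i 1 := by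
        rw [add_assoc, hvv]
      calc |f (k + v) - f k|
          ≤ |f (k + v) - f (k + v')| + |f (k + v') - f k| := abs_sub_le _ _ _
        _ ≤ |D| + |D| * N := by
            refine add_le_add ?_ (ih v' k hsum')
            rw [e1]
            exact hDE (k + v') i
        _ = |D| * (N + 1 : ℕ) := by push_cast; ring
  -- Lipschitz bound
  have lip : ∀ k m : Fin n → ℕ, |f k - f m| ≤ |D| * ∑ i, |(k i : ℝ) - m i| := by
    intro k m
    set u : Fin n → ℕ := fun i => max (k i) (m i) with hu
    have e1 : u = k + fun i => m i - k i := by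
      funext i; simp [u, Pi.add_apply]; omega
    have e2 : u = m + fun i => k i - m i := by
      funext i; simp [u, Pi.add_apply]; omega
    have h1 : |f u - f k| ≤ |D| * ((∑ i, (m i - k i) : ℕ) : ℝ) := by
      rw [e1]; exact key _ _ _ rfl
    have h2 : |f u - f m| ≤ |D| * ((∑ i, (k i - m i) : ℕ) : ℝ) := by
      rw [e2]; exact key _ _ _ rfl
    have h3 : ((∑ i, (m i - k i) : ℕ) : ℝ) + ((∑ i, (k i - m i) : ℕ) : ℝ)
        = ∑ i, |(k i : ℝ) - m i| := by
      push_cast [← Finset.sum_add_distrib]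
      refine Finset.sum_congr rfl fun i _ => ?_
      rcases le_total (k i) (m i) with h | h
      · rw [Nat.sub_eq_zero_of_le h, Nat.cast_sub h, abs_sub_comm,
          abs_of_nonneg (by exact sub_nonneg.mpr (by exact_mod_cast h))]
        push_cast; ring
      · rw [Nat.sub_eq_zero_of_le h, Nat.cast_sub h,
          abs_of_nonneg (by exact sub_nonneg.mpr (by exact_mod_cast h))]
        push_cast; ring
    calc |f k - f m| ≤ |f k - f u| + |f u - f m| := abs_sub_le _ _ _
      _ ≤ |D| * ((∑ i, (m i - k i) : ℕ) : ℝ) + |D| * ((∑ i, (k i - m i) : ℕ) : ℝ) := by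
          refine add_le_add ?_ h2
          rw [abs_sub_comm]; exact h1
      _ = |D| * (((∑ i, (m i - k i) : ℕ) : ℝ) + ((∑ i, (k i - m i) : ℕ) : ℝ)) := by ring
      _ = |D| * ∑ i, |(k i : ℝ) - m i| := by rw [h3]
  -- the bound sequence
  set b : ℕ → ℝ := fun t => |D| * ∑ i, |r t i - lam i| + (|D| * n) / t with hb
  have hbound : ∀ᶠ t : ℕ in atTop,
      ‖f (fun i => ⌈(t : ℝ) * r t i⌉₊) / t - f (fun i => ⌈(t : ℝ) * lam i⌉₊) / t‖ ≤ b t := by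
    filter_upwards [eventually_ge_atTop 1] with t ht
    have ht0 : (0:ℝ) < t := by exact_mod_cast Nat.lt_of_lt_of_le Nat.zero_lt_one ht
    have hceil : ∀ i, |((⌈(t : ℝ) * r t i⌉₊ : ℕ) : ℝ) - ((⌈(t : ℝ) * lam i⌉₊ : ℕ) : ℝ)|
        ≤ (t : ℝ) * |r t i - lam i| + 1 := by
      intro i
      have hx : (0:ℝ) ≤ (t : ℝ) * r t i := mul_nonneg (Nat.cast_nonneg t) (hr t i)
      have hy : (0:ℝ) ≤ (t : ℝ) * lam i := mul_nonneg (Nat.cast_nonneg t) (hlam i)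
      have c1 : ((⌈(t : ℝ) * r t i⌉₊ : ℕ) : ℝ) < (t : ℝ) * r t i + 1 := Nat.ceil_lt_add_one hx
      have c2 : (t : ℝ) * r t i ≤ ((⌈(t : ℝ) * r t i⌉₊ : ℕ) : ℝ) := Nat.le_ceil _
      have c3 : ((⌈(t : ℝ) * lam i⌉₊ : ℕ) : ℝ) < (t : ℝ) * lam i + 1 := Nat.ceil_lt_add_one hy
      have c4 : (t : ℝ) * lam i ≤ ((⌈(t : ℝ) * lam i⌉₊ : ℕ) : ℝ) := Nat.le_ceil _
      have habs : |(t : ℝ) * r t i - (t : ℝ) * lam i| = (t : ℝ) * |r t i - lam i| := by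
        rw [← mul_sub, abs_mul, Nat.abs_cast]
      have l1 := le_abs_self ((t : ℝ) * r t i - (t : ℝ) * lam i)
      have l2 := neg_abs_le ((t : ℝ) * r t i - (t : ℝ) * lam i)
      rw [abs_sub_le_iff]
      constructor <;> [linarith; linarith]
    have S0 : (0:ℝ) ≤ ∑ i, |r t i - lam i| :=
      Finset.sum_nonneg fun i _ => abs_nonneg _
    calc ‖f (fun i => ⌈(t : ℝ) * r t i⌉₊) / t - f (fun i => ⌈(t : ℝ) * lam i⌉₊) / t‖
        = |f (fun i => ⌈(t : ℝ) * r t i⌉₊) - f (fun i => ⌈(t : ℝ) * lam i⌉₊)| / t := by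
          rw [Real.norm_eq_abs, ← sub_div, abs_div, abs_of_pos ht0]
      _ ≤ (|D| * ∑ i, |((⌈(t : ℝ) * r t i⌉₊ : ℕ) : ℝ) - ((⌈(t : ℝ) * lam i⌉₊ : ℕ) : ℝ)|) / t := by
          gcongr
          exact lip _ _
      _ ≤ (|D| * ∑ i, ((t : ℝ) * |r t i - lam i| + 1)) / t := by
          gcongr with i hi
          exact hceil i
      _ = b t := by
          rw [Finset.sum_add_distrib, Finset.sum_const, ← Finset.mul_sum]
          simp only [Finset.card_univ, Fintype.card_fin, nsmul_eq_mul, mul_one]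
          rw [mul_add, add_div]
          congr 1
          rw [mul_div_assoc, mul_div_cancel_left₀ _ ht0.ne']
  have t1 : Tendsto (fun t : ℕ => ∑ i, |r t i - lam i|) atTop (𝓝 0) := by
    have h0 : (0:ℝ) = ∑ _i : Fin n, (0:ℝ) := by simp
    rw [h0]
    refine tendsto_finset_sum _ fun i _ => ?_
    have h1 : Tendsto (fun t : ℕ => r t i - lam i) atTop (𝓝 (lam i - lam i)) :=
      (hconv i).sub tendsto_const_nhds
    simpa using h1.abs
  have t2 : Tendsto (fun t : ℕ => (|D| * n) / (t : ℝ)) atTop (𝓝 0) := by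
    simpa [div_eq_mul_inv] using
      ((tendsto_natCast_atTop_atTop (R := ℝ)).inv_tendsto_atTop).const_mul (|D| * n)
  have hbz : Tendsto b atTop (𝓝 0) := by
    have := (t1.const_mul |D|).add t2
    simpa using this
  have hdiff : Tendsto (fun t : ℕ =>
      f (fun i => ⌈(t : ℝ) * r t i⌉₊) / t - f (fun i => ⌈(t : ℝ) * lam i⌉₊) / t)
      atTop (𝓝 0) :=
    squeeze_zero_norm' hbound hbz
  have := hfhat.add hdiff
  simpa using this
end

section
/- Let (Q(t))_{t≥1} be a sequence of nonnegative random variables with 0 ≤ Q(t)/t ≤ S(t)/t, where S(t)/t converges almost surely and in mean to a constant λ > 0 (so that {S(t)/t} is uniformly integrable). If lim_{q→∞} limsup_{t→∞} P(Q(t) > q) = 0, then lim_{t→∞} E[Q(t)]/t = 0. -/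
open MeasureTheory Filter Topology

/-!
Scheffé's lemma upgrades the almost sure and mean convergence of `S t / t` to `lam` into
convergence in `L¹`. On `{Q t ≤ q}` we have `Q t / t ≤ q / t`, and elsewhere
`Q t / t ≤ S t / t ≤ |S t / t - lam| + lam`, so
`E[Q t] / t ≤ q / t + E|S t / t - lam| + lam * P(Q t > q)`. The first two terms vanish as
`t → ∞`, and tightness makes the last one small once `q` is large.
-/

section

variable {α : Type*} [MeasurableSpace α] {μ : Measure α}

theorem tendsto_integral_abs_sub_of_tendsto_ae {f : ℕ → α → ℝ} {g : α → ℝ}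
    (hf : ∀ n, Integrable (f n) μ) (hg : Integrable g μ) (hf0 : ∀ n, 0 ≤ᵐ[μ] f n)
    (hlim : ∀ᵐ a ∂μ, Tendsto (fun n => f n a) atTop (𝓝 (g a)))
    (hint : Tendsto (fun n => ∫ a, f n a ∂μ) atTop (𝓝 (∫ a, g a ∂μ))) :
    Tendsto (fun n => ∫ a, |f n a - g a| ∂μ) atTop (𝓝 0) := by
  -- `|f - g| = (f - g) + 2 (g - f)⁺`, and `(g - f n)⁺ ≤ |g|` because `f n ≥ 0`.
  have hdeficit_int : ∀ n, Integrable (fun a => max (g a - f n a) 0) μ :=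
    fun n => (hg.sub (hf n)).pos_part
  have hdeficit : Tendsto (fun n => ∫ a, max (g a - f n a) 0 ∂μ) atTop (𝓝 0) := by
    have := tendsto_integral_of_dominated_convergence (fun a => |g a|)
      (fun n => (hdeficit_int n).aestronglyMeasurable) hg.abs
      (fun n => (hf0 n).mono fun a ha => by
        rw [Real.norm_of_nonneg (le_max_right _ _)]
        exact max_le (by linarith [le_abs_self (g a), show 0 ≤ f n a from ha]) (abs_nonneg _))
      (hlim.mono fun a ha => (tendsto_const_nhds.sub ha).max tendsto_const_nhds)
    simpa using this
  have hsplit : ∀ n, ∫ a, |f n a - g a| ∂μ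
      = (∫ a, f n a ∂μ - ∫ a, g a ∂μ) + 2 * ∫ a, max (g a - f n a) 0 ∂μ := by
    intro n
    have habs : ∀ x y : ℝ, |x - y| = (x - y) + 2 * max (y - x) 0 := fun x y => by
      rcases le_total x y with h | h
      · rw [abs_of_nonpos (by linarith), max_eq_left (by linarith)]; ring
      · rw [abs_of_nonneg (by linarith), max_eq_right (by linarith)]; ring
    simp_rw [habs]
    have hsub : Integrable (fun a => f n a - g a) μ := (hf n).sub hg
    rw [integral_add hsub ((hdeficit_int n).const_mul 2),
      integral_sub (hf n) hg, integral_const_mul]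
  simp_rw [hsplit]
  simpa using (tendsto_sub_nhds_zero_iff.2 hint).add (hdeficit.const_mul 2)

theorem Filter.Tendsto.eventually_eventually_lt_of_limsup {ι κ β : Type*}
    [ConditionallyCompleteLinearOrder β] [TopologicalSpace β] [OrderTopology β]
    {l : Filter ι} {l' : Filter κ} {p : κ → ι → β} {c δ : β}
    (h : Tendsto (fun q => limsup (p q) l) l' (𝓝 c))
    (hbdd : ∀ q, IsBoundedUnder (· ≤ ·) l (p q)) (hδ : c < δ) :
    ∀ᶠ q in l', ∀ᶠ t in l, p q t < δ :=
  (h.eventually (eventually_lt_nhds hδ)).mono fun q hq => eventually_lt_of_limsup_lt hq (hbdd q)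

theorem integral_le_add_integral_abs_sub_add_mul_measureReal [IsFiniteMeasure μ]
    {X Y : α → ℝ} {q c : ℝ} (hX : Integrable X μ) (hY : Integrable Y μ) (hXY : X ≤ᵐ[μ] Y)
    (hq : 0 ≤ q) :
    ∫ a, X a ∂μ ≤ q * μ.real Set.univ + ∫ a, |Y a - c| ∂μ + c * μ.real {a | q < X a} := by
  set A := {a | q < X a}
  have hA : NullMeasurableSet A μ := nullMeasurableSet_lt aemeasurable_const hX.aemeasurable
  have hbound : X ≤ᵐ[μ] fun a => q + |Y a - c| + A.indicator (fun _ => c) a := by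
    filter_upwards [hXY] with a ha
    by_cases haA : q < X a
    · rw [Set.indicator_of_mem (s := A) haA]
      linarith [le_abs_self (Y a - c)]
    · rw [Set.indicator_of_notMem (s := A) haA]
      linarith [abs_nonneg (Y a - c), not_lt.1 haA]
  have hint_abs : Integrable (fun a => |Y a - c|) μ := (hY.sub (integrable_const c)).abs
  have hint_const_abs : Integrable (fun a => q + |Y a - c|) μ := (integrable_const q).add hint_abs
  have hint_ind : Integrable (A.indicator fun _ => c) μ := (integrable_const c).indicator₀ hA
  calc ∫ a, X a ∂μ ≤ ∫ a, (q + |Y a - c| + A.indicator (fun _ => c) a) ∂μ :=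
        integral_mono_ae hX (hint_const_abs.add hint_ind) hbound
    _ = q * μ.real Set.univ + ∫ a, |Y a - c| ∂μ + c * μ.real A := by
        rw [integral_add hint_const_abs hint_ind,
          integral_add (integrable_const q) hint_abs,
          integral_indicator₀ hA, setIntegral_const, integral_const, smul_eq_mul, smul_eq_mul,
          mul_comm q, mul_comm c]

end

/-- Lemma `weak -> average`: if `0 ≤ Q(t) ≤ S(t)` where
`S(t)/t → λ > 0` almost surely and in mean, and the queue process satisfies
the stability (tightness) condition
`lim_{q→∞} limsup_{t→∞} P(Q(t) > q) = 0`, then `E[Q(t)]/t → 0`. -/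
theorem stmt12 {Ω : Type*} [MeasurableSpace Ω] (P : Measure Ω)
    [IsProbabilityMeasure P]
    (Q S : ℕ → Ω → ℝ) (lam : ℝ) (hlam : 0 < lam)
    (hQint : ∀ t, Integrable (Q t) P)
    (hSint : ∀ t, Integrable (S t) P)
    (hQ0 : ∀ t ω, 0 ≤ Q t ω)
    (hQS : ∀ t ω, Q t ω ≤ S t ω)
    (hSas : ∀ᵐ ω ∂P, Tendsto (fun t : ℕ => S t ω / t) atTop (𝓝 lam))
    (hSmean : Tendsto (fun t : ℕ => (∫ ω, S t ω ∂P) / t) atTop (𝓝 lam))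
    (hstab : Tendsto
      (fun q : ℝ => limsup (fun t : ℕ => (P {ω | Q t ω > q}).toReal) atTop)
      atTop (𝓝 0)) :
    Tendsto (fun t : ℕ => (∫ ω, Q t ω ∂P) / t) atTop (𝓝 0) := by
  have hL1 : Tendsto (fun t : ℕ => ∫ ω, |S t ω / t - lam| ∂P) atTop (𝓝 0) :=
    tendsto_integral_abs_sub_of_tendsto_ae (fun t => (hSint t).div_const _) (integrable_const lam)
      (fun t => .of_forall fun ω => div_nonneg ((hQ0 t ω).trans (hQS t ω)) t.cast_nonneg) hSas
      (by simpa [integral_div] using hSmean)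
  have hbdd (q : ℝ) : IsBoundedUnder (· ≤ ·) atTop fun t => (P {ω | Q t ω > q}).toReal :=
    isBoundedUnder_of ⟨1, fun t => measureReal_le_one⟩
  refine tendsto_order.2 ⟨fun a ha => .of_forall fun t =>
    ha.trans_le (div_nonneg (integral_nonneg (hQ0 t)) t.cast_nonneg), fun ε hε => ?_⟩
  obtain ⟨q, hQq, hq⟩ := ((hstab.eventually_eventually_lt_of_limsup hbdd
    (div_pos (half_pos hε) hlam)).and (eventually_ge_atTop 0)).exists
  have hsmall : Tendsto (fun t : ℕ => q / t + ∫ ω, |S t ω / t - lam| ∂P) atTop (𝓝 0) := by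
    simpa using (tendsto_const_div_atTop_nhds_zero_nat q).add hL1
  filter_upwards [hQq, hsmall.eventually (gt_mem_nhds (half_pos hε)), eventually_gt_atTop 0]
    with t hPt hsmall_t ht
  have hset : {ω | q / t < Q t ω / t} = {ω | Q t ω > q} := by
    ext; simp [div_lt_div_iff_of_pos_right (Nat.cast_pos (α := ℝ) |>.2 ht)]
  have hbound := integral_le_add_integral_abs_sub_add_mul_measureReal (c := lam)
    ((hQint t).div_const t) ((hSint t).div_const t)
    (.of_forall fun ω => div_le_div_of_nonneg_right (hQS t ω) t.cast_nonneg)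
    (div_nonneg hq t.cast_nonneg)
  rw [probReal_univ, mul_one, hset, integral_div] at hbound
  calc (∫ ω, Q t ω ∂P) / t
      ≤ q / t + ∫ ω, |S t ω / t - lam| ∂P + lam * P.real {ω | Q t ω > q} := hbound
    _ < ε / 2 + ε / 2 := add_lt_add hsmall_t (by rwa [mul_comm, ← lt_div_iff₀ hlam])
    _ = ε := add_halves ε
end
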